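/- If b_F ∈ bddᵘ(a_E), then there is an ultraimaginary c_G ∈ bddᵘ(a_E) of arity at most |a|+|T| such that b_F and c_G are interdefinable over ∅ (i.e., Aut(𝕄/b_F) = Aut(𝕄/c_G)). Furthermore, c can be taken to be an enumeration of any small model of cardinality at most |a|+|T| containing a. -/

import Mathlib

open FirstOrder Cardinal

universe u v w

namespace BddUltra

variable (L : FirstOrder.Language.{u, u}) (M : Type u) [L.Structure M]

/-- The automorphism group of `M` (composition as multiplication). -/
instance : Group (M ≃[L] M) where
  mul f g := f.comp g
  one := Language.Equiv.refl L M
  inv := Language.Equiv.symm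
  mul_assoc f g h := by ext x; rfl
  one_mul f := by ext x; rfl
  mul_one f := by ext x; rfl
  inv_mul_cancel f := by ext x; exact f.toEquiv.symm_apply_apply x

/-- The cardinality `|T|` of the theory: the cardinality of the language plus `ℵ₀`. -/
def cardT : Cardinal.{u} := L.card + ℵ₀

/-- Two tuples realize the same complete type over `∅`. -/
def SameType {α : Type v} (a b : α → M) : Prop :=
  ∀ φ : L.Formula α, φ.Realize a ↔ φ.Realize b

/-- Two tuples realize the same complete type over the set `A ⊆ M` of parameters. -/
def SameTypeOver (A : Set M) {α : Type v} (a b : α → M) : Prop :=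
  ∀ φ : L.Formula (↥A ⊕ α),
    φ.Realize (Sum.elim (Subtype.val : ↥A → M) a) ↔
      φ.Realize (Sum.elim (Subtype.val : ↥A → M) b)

theorem SameType.comp {α : Type v} {γ : Type w} {a b : α → M} (h : SameType L M a b)
    (g : γ → α) : SameType L M (a ∘ g) (b ∘ g) := by
  intro φ
  have := h (φ.relabel g)
  rwa [Language.Formula.realize_relabel, Language.Formula.realize_relabel] at this

/-- An invariant equivalence relation of arity `α` on `α`-tuples from `M`. -/
structure IER (α : Type u) : Type u where
  rel : (α → M) → (α → M) → Prop
  equiv : Equivalence rel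
  invariant : ∀ a b c d : α → M,
    SameType L M (Sum.elim a b) (Sum.elim c d) → (rel a b ↔ rel c d)

def IER.setoid {α : Type u} (E : IER L M α) : Setoid (α → M) := ⟨E.rel, E.equiv⟩

/-- The pair (juxtaposition) of two invariant equivalence relations. -/
def IER.prod {α β : Type u} (E : IER L M α) (F : IER L M β) : IER L M (α ⊕ β) where
  rel x y := E.rel (x ∘ Sum.inl) (y ∘ Sum.inl) ∧ F.rel (x ∘ Sum.inr) (y ∘ Sum.inr)
  equiv := ⟨fun _ => ⟨E.equiv.refl _, F.equiv.refl _⟩,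
    fun h => ⟨E.equiv.symm h.1, F.equiv.symm h.2⟩,
    fun h h' => ⟨E.equiv.trans h.1 h'.1, F.equiv.trans h.2 h'.2⟩⟩
  invariant := by
    intro a b c d h
    have e1 : ∀ (x : α ⊕ β → M) (y : α ⊕ β → M),
        (Sum.elim x y) ∘ (Sum.map Sum.inl Sum.inl : α ⊕ α → (α ⊕ β) ⊕ (α ⊕ β))
          = Sum.elim (x ∘ Sum.inl) (y ∘ Sum.inl) := by
      intro x y; funext i; cases i <;> rfl
    have e2 : ∀ (x : α ⊕ β → M) (y : α ⊕ β → M),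
        (Sum.elim x y) ∘ (Sum.map Sum.inr Sum.inr : β ⊕ β → (α ⊕ β) ⊕ (α ⊕ β))
          = Sum.elim (x ∘ Sum.inr) (y ∘ Sum.inr) := by
      intro x y; funext i; cases i <;> rfl
    have h1 := h.comp (L := L) (M := M) (Sum.map Sum.inl Sum.inl)
    have h2 := h.comp (L := L) (M := M) (Sum.map Sum.inr Sum.inr)
    rw [e1, e1] at h1
    rw [e2, e2] at h2
    exact and_congr (E.invariant _ _ _ _ h1) (F.invariant _ _ _ _ h2)

/-- The set of automorphisms fixing the ultraimaginary `a_E`. -/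
def autU {α : Type u} (E : IER L M α) (a : α → M) : Set (M ≃[L] M) :=
  {σ | E.rel a (⇑σ ∘ a)}

/-- The set of automorphisms fixing the set `A` pointwise. -/
def autSet (A : Set M) : Set (M ≃[L] M) := {σ | ∀ x ∈ A, σ x = x}

/-- The set of automorphisms fixing the set `A` and the tuple `u` pointwise. -/
def autSetTup (A : Set M) {γ : Type v} (u : γ → M) : Set (M ≃[L] M) :=
  {σ | (∀ x ∈ A, σ x = x) ∧ ∀ i, σ (u i) = u i}

/-- The ultraimaginary `b_F` is bounded over a parameter set whose pointwise
stabilizer is `X`: the `X`-orbit of `b` meets fewer than `κ` classes of `F`. -/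
def BddU (κ : Cardinal.{u}) (X : Set (M ≃[L] M)) {β : Type u} (F : IER L M β)
    (b : β → M) : Prop :=
  ∃ S : Set (β → M), #S < κ ∧ ∀ σ ∈ X, ∃ s ∈ S, F.rel (⇑σ ∘ b) s

/-- The cardinality of the orbit of the ultraimaginary `b_F` under the set `X`
of automorphisms. -/
def orbitCard (X : Set (M ≃[L] M)) {β : Type u} (F : IER L M β) (b : β → M) :
    Cardinal.{u} :=
  #(Set.range fun σ : X => Quotient.mk F.setoid (⇑σ.1 ∘ b))

/-- `b ⫝ᵇᵘ_A c`, expressed in terms of the pointwise stabilizers `XA`, `XAb`, `XAc` of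
`A`, `Ab` and `Ac`: an ultraimaginary is bounded over `Ab` and over `Ac` iff it is
bounded over `A`. -/
def IndepBU (κ : Cardinal.{u}) (XA XAb XAc : Set (M ≃[L] M)) : Prop :=
  ∀ (δ : Type u) (H : IER L M δ) (d : δ → M),
    (BddU L M κ XAb H d ∧ BddU L M κ XAc H d) ↔ BddU L M κ XA H d

/-- The set of automorphisms fixing an elementary substructure pointwise. -/
def autES (N : L.ElementarySubstructure M) : Set (M ≃[L] M) :=
  autSet L M (N : Set M)

/-- `Autf(𝕄/x)` where `X = Aut(𝕄/x)`: the subgroup generated by all pointwise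
stabilizers of small models that are contained in `X`. -/
def autfGen (κ : Cardinal.{u}) (X : Set (M ≃[L] M)) : Subgroup (M ≃[L] M) :=
  Subgroup.closure {σ | ∃ N : L.ElementarySubstructure M,
    #(N : Set M) < κ ∧ autES L M N ⊆ X ∧ σ ∈ autES L M N}

/-- The group of Lascar strong automorphisms over the set `A ⊆ M`: generated by the
pointwise stabilizers of small models containing `A`. -/
def lascarGrp (κ : Cardinal.{u}) (A : Set M) : Subgroup (M ≃[L] M) :=
  Subgroup.closure {σ | ∃ N : L.ElementarySubstructure M,
    #(N : Set M) < κ ∧ A ⊆ (N : Set M) ∧ σ ∈ autES L M N}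

/-- κ-saturation: every finitely realizable set of formulas over a parameter tuple of
arity `< κ`, in `< κ` many variables, is realized. -/
def Saturated (κ : Cardinal.{u}) : Prop :=
  ∀ (α β : Type u), #α < κ → #β < κ → ∀ (a : α → M) (p : Set (L.Formula (α ⊕ β))),
    (∀ s : Finset (L.Formula (α ⊕ β)), ↑s ⊆ p →
      ∃ b : β → M, ∀ φ ∈ s, φ.Realize (Sum.elim a b)) →
    ∃ b : β → M, ∀ φ ∈ p, φ.Realize (Sum.elim a b)

/-- Strong κ-homogeneity: tuples of arity `< κ` with the same type over `∅` are
conjugate under an automorphism. -/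
def Homog (κ : Cardinal.{u}) : Prop :=
  ∀ (α : Type u) (a b : α → M), #α < κ → SameType L M a b →
    ∃ σ : M ≃[L] M, ∀ i, σ (a i) = b i

/-- `M` is a monster model with bound `κbar`: `κbar` is a sufficiently large
(uncountable, regular, strong limit, above `|T|`) cardinal, and `M` is
`κbar`-saturated and strongly `κbar`-homogeneous. -/
structure Monster (κbar : Cardinal.{u}) : Prop where
  aleph0_lt : ℵ₀ < κbar
  isRegular : κbar.IsRegular
  strongLimit : ∀ ρ : Cardinal.{u}, ρ < κbar → 2 ^ ρ < κbar
  lang_lt : L.card < κbar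
  saturated : Saturated L M κbar
  homog : Homog L M κbar

/-- A hyperimaginary: the class of a countable tuple under a countably
type-definable (over `∅`) equivalence relation. -/
structure Hyp : Type u where
  rep : ℕ → M
  fmls : Set (L.Formula (ℕ ⊕ ℕ))
  countable : fmls.Countable
  equiv : Equivalence fun a b : ℕ → M => ∀ φ ∈ fmls, φ.Realize (Sum.elim a b)

/-- The automorphisms fixing each hyperimaginary in the set `A`. -/
def autHyp (A : Set (Hyp L M)) : Set (M ≃[L] M) :=
  {σ | ∀ h ∈ A, ∀ φ ∈ h.fmls, φ.Realize (Sum.elim h.rep (⇑σ ∘ h.rep))}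

/-- The automorphisms fixing each hyperimaginary in `A` and the tuple `u` pointwise. -/
def autHypTup (A : Set (Hyp L M)) {γ : Type v} (u : γ → M) : Set (M ≃[L] M) :=
  {σ | σ ∈ autHyp L M A ∧ ∀ i, σ (u i) = u i}

/-- Flattening of a finite subsequence of a sequence of tuples into a single tuple. -/
def flatten {ι : Type v} {β : Type w} (f : ι → β → M) {n : ℕ} (s : Fin n → ι) :
    Fin n × β → M := fun p => f (s p.1) p.2

/-- A sequence of tuples is `A`-indiscernible (`A ⊆ M` a set of real parameters). -/
def IndiscOver (A : Set M) {ι : Type v} [Preorder ι] {β : Type w} (f : ι → β → M) : Prop :=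
  ∀ (n : ℕ) (s t : Fin n → ι), StrictMono s → StrictMono t →
    SameTypeOver L M A (flatten M f s) (flatten M f t)

/-- Two sequences have the same Ehrenfeucht–Mostowski type over `A ⊆ M`. -/
def SameEMOver (A : Set M) {ι : Type v} [Preorder ι] {ι' : Type w} [Preorder ι']
    {β : Type u} (f : ι → β → M) (g : ι' → β → M) : Prop :=
  ∀ (n : ℕ) (s : Fin n → ι) (t : Fin n → ι'), StrictMono s → StrictMono t →
    SameTypeOver L M A (flatten M f s) (flatten M g t)

/-- A sequence of tuples is `A`-indiscernible, for `A` a set of hyperimaginaries: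
any two increasing tuples from the sequence are conjugate under `Aut(𝕄/A)`. -/
def IndiscOverHyp (A : Set (Hyp L M)) {ι : Type v} [Preorder ι] {β : Type w}
    (f : ι → β → M) : Prop :=
  ∀ (n : ℕ) (s t : Fin n → ι), StrictMono s → StrictMono t →
    ∃ σ ∈ autHyp L M A, ∀ (i : Fin n) (x : β), σ (f (s i) x) = f (t i) x

/-- Two sequences have the same EM-type over the set `A` of hyperimaginaries. -/
def SameEMOverHyp (A : Set (Hyp L M)) {ι : Type v} [Preorder ι] {ι' : Type w} [Preorder ι']
    {β : Type u} (f : ι → β → M) (g : ι' → β → M) : Prop :=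
  ∀ (n : ℕ) (s : Fin n → ι) (t : Fin n → ι'), StrictMono s → StrictMono t →
    ∃ σ ∈ autHyp L M A, ∀ (i : Fin n) (x : β), σ (f (s i) x) = g (t i) x

/-- A sequence of `β`-tuples from `N`, indexed by an arbitrary small linear order. -/
structure Seq (N : Type u) (β : Type u) : Type (u + 1) where
  idx : Type u
  [ord : LinearOrder idx]
  val : idx → β → N

attribute [instance] Seq.ord

/-- Concatenation `I + J` of sequences. -/
def Seq.concat {N β : Type u} (I J : Seq N β) : Seq N β where
  idx := I.idx ⊕ₗ J.idx
  val := fun x => Sum.elim I.val J.val (ofLex x)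

/-- The sequence `I` flattened into a single tuple. -/
def Seq.flat {N β : Type u} (I : Seq N β) : I.idx × β → N := fun p => I.val p.1 p.2

/-- The image `σ · I` of a sequence under an automorphism. -/
def Seq.map {β : Type u} (σ : M ≃[L] M) (I : Seq M β) : Seq M β where
  idx := I.idx
  ord := I.ord
  val := fun i x => σ (I.val i x)

/-- The sequence `(b_i)_{i < ω}` packaged as a `Seq`. -/
def Seq.ofNat {N β : Type u} (b : ℕ → β → N) : Seq N β where
  idx := ULift.{u} ℕ
  val := fun n => b n.down

/-- `I ∼_A J`: both sequences are infinite and `I + J` or `J + I` is `A`-indiscernible. -/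
def SimSeq (A : Set M) {β : Type u} (I J : Seq M β) : Prop :=
  Infinite I.idx ∧ Infinite J.idx ∧
    (IndiscOver L M A (I.concat J).val ∨ IndiscOver L M A (J.concat I).val)

/-- `I ≈_A J`: the transitive closure of `∼_A`. -/
def ApproxSeq (A : Set M) {β : Type u} : Seq M β → Seq M β → Prop :=
  Relation.TransGen (SimSeq L M A)

/-- `I ∼_A J` for `A` a set of hyperimaginaries. -/
def SimSeqHyp (A : Set (Hyp L M)) {β : Type u} (I J : Seq M β) : Prop :=
  Infinite I.idx ∧ Infinite J.idx ∧
    (IndiscOverHyp L M A (I.concat J).val ∨ IndiscOverHyp L M A (J.concat I).val)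

/-- `I ≈_A J` for `A` a set of hyperimaginaries. -/
def ApproxSeqHyp (A : Set (Hyp L M)) {β : Type u} : Seq M β → Seq M β → Prop :=
  Relation.TransGen (SimSeqHyp L M A)

/-- `u ⫝ᵇᵘ_A v` for tuples `u`, `v` over a set `A ⊆ M` of real parameters. -/
def IndepBUReal (κ : Cardinal.{u}) (A : Set M) {γ : Type v} {δ : Type w}
    (x : γ → M) (y : δ → M) : Prop :=
  IndepBU L M κ (autSet L M A) (autSetTup L M A x) (autSetTup L M A y)

/-- `u ⫝ᵇᵘ_A v` for tuples `u`, `v` over a set `A` of hyperimaginaries. -/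
def IndepBUHyp (κ : Cardinal.{u}) (A : Set (Hyp L M)) {γ : Type v} {δ : Type w}
    (x : γ → M) (y : δ → M) : Prop :=
  IndepBU L M κ (autHyp L M A) (autHypTup L M A x) (autHypTup L M A y)

/-- A total `⫝ᵇᵘ`-Morley sequence over the set `A ⊆ M`. -/
def TotalMorleyReal (κ : Cardinal.{u}) (A : Set M) {β : Type u} (b : ℕ → β → M) : Prop :=
  IndiscOver L M A b ∧
    ∀ I J : Seq M β, #I.idx < κ → #J.idx < κ →
      SameEMOver L M A ((I.concat J).val) b →
        IndepBUReal L M κ A I.flat J.flat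

/-- A total `⫝ᵇᵘ`-Morley sequence over the set `A` of hyperimaginaries. -/
def TotalMorleyHyp (κ : Cardinal.{u}) (A : Set (Hyp L M)) {β : Type u}
    (b : ℕ → β → M) : Prop :=
  IndiscOverHyp L M A b ∧
    ∀ I J : Seq M β, #I.idx < κ → #J.idx < κ →
      SameEMOverHyp L M A ((I.concat J).val) b →
        IndepBUHyp L M κ A I.flat J.flat

/-- `tp(b/Ac)` divides over `A`. -/
def Divides (A : Set M) {β : Type v} {γ : Type w} (b : β → M) (c : γ → M) : Prop :=
  ∃ ci : ℕ → γ → M, ci 0 = c ∧ IndiscOver L M A ci ∧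
    ¬∃ b' : β → M, ∀ (i : ℕ) (φ : L.Formula (↥A ⊕ (β ⊕ γ))),
      φ.Realize (Sum.elim (Subtype.val : ↥A → M) (Sum.elim b c)) →
        φ.Realize (Sum.elim (Subtype.val : ↥A → M) (Sum.elim b' (ci i)))

/-- The partition relation `λ → (β)^{<ω}_γ`. -/
def ArrowRel (lam : Cardinal.{u}) (ot : Ordinal.{u}) (c : Cardinal.{u}) : Prop :=
  ∀ f : Finset lam.ord.ToType → c.ord.ToType,
    ∃ X : Set lam.ord.ToType, Nonempty (↥X ≃o ot.ToType) ∧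
      ∀ s t : Finset lam.ord.ToType, ↑s ⊆ X → ↑t ⊆ X → s.card = t.card → f s = f t

/-- The Lascar strong automorphism group over a set `A` of hyperimaginaries:
generated by pointwise stabilizers of small models fixing every element of `A`. -/
def lascarHypGrp (κ : Cardinal.{u}) (A : Set (Hyp L M)) : Subgroup (M ≃[L] M) :=
  Subgroup.closure {σ | ∃ N : L.ElementarySubstructure M,
    #(N : Set M) < κ ∧ autES L M N ⊆ autHyp L M A ∧ σ ∈ autES L M N}

/-- `b_F ⫝ᵇᵘ_{a_E} c_G` for ultraimaginaries. -/
def IndepU (κ : Cardinal.{u}) {α β γ : Type u} (E : IER L M α) (a : α → M)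
    (F : IER L M β) (b : β → M) (G : IER L M γ) (c : γ → M) : Prop :=
  IndepBU L M κ (autU L M E a) (autU L M E a ∩ autU L M F b)
    (autU L M E a ∩ autU L M G c)

/-!
Let `N ⊇ a` be a small model and `σ ∈ Aut(𝕄/N)`; put `b' = σ b`, so `b ≡_N b'`. Take a coheir `D`
of `tp(b/N)` and use saturation along a well-order of length `λ = |S|⁺` (`S` witnessing the
boundedness of `b_F`) to build `(w_i)_{i < λ}`, each `w_i` realizing the `D`-coheir over
`N b b' (w_j)_{j < i}`. Then `tp(x w_i / N)` only depends on `tp(x / N)` for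
`x ∈ {b, b'} ∪ {w_j | j < i}`. Every `w_i` is an `N`-conjugate of `b`, so its `F`-class is one of
fewer than `λ` classes: some `w_i F w_j` with `i < j`, whence `b F w_j` and `b' F w_j`, i.e.
`σ` fixes `b_F`.

So `Aut(𝕄/N)` fixes `b_F`, and on enumerations `x, y` of conjugates of `N` the relation
"`x ≡ y`, and `σ N = x`, `τ N = y` imply `σ b F τ b`" is an invariant equivalence relation `G`
with `Aut(𝕄/N_G) = Aut(𝕄/b_F)`; equal stabilizers transfer boundedness over `a_E`. Downward
Löwenheim–Skolem provides `N` of size at most `|a| + |T|`.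
-/

variable {L M}

open Language Set

section Basic

@[simp]
theorem coe_mul (σ τ : M ≃[L] M) : ⇑(σ * τ) = ⇑σ ∘ ⇑τ := rfl

@[simp]
theorem coe_one : ⇑(1 : M ≃[L] M) = id := rfl

theorem SameType.refl {α : Type v} (x : α → M) : SameType L M x x := fun _ => Iff.rfl

theorem SameType.symm {α : Type v} {x y : α → M} (h : SameType L M x y) :
    SameType L M y x := fun φ => (h φ).symm

theorem SameType.trans {α : Type v} {x y z : α → M} (hxy : SameType L M x y)
    (hyz : SameType L M y z) : SameType L M x z := fun φ => (hxy φ).trans (hyz φ)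

theorem sameType_comp_equiv (σ : M ≃[L] M) {α : Type v} (x : α → M) :
    SameType L M x (⇑σ ∘ x) := fun φ => (StrongHomClass.realize_formula σ φ).symm

theorem SameType.sum_elim_left {α γ : Type v} {x x' : α → M} {y y' : γ → M}
    (h : SameType L M (Sum.elim x y) (Sum.elim x' y')) : SameType L M x x' := by
  simpa only [Sum.elim_comp_inl] using SameType.comp L M h Sum.inl

theorem SameType.sum_elim_right {α γ : Type v} {x x' : α → M} {y y' : γ → M}
    (h : SameType L M (Sum.elim x y) (Sum.elim x' y')) : SameType L M y y' := by
  simpa only [Sum.elim_comp_inr] using SameType.comp L M h Sum.inr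

theorem IER.rel_comp_equiv {β : Type u} (F : IER L M β) (σ : M ≃[L] M) {x y : β → M}
    (h : F.rel x y) : F.rel (⇑σ ∘ x) (⇑σ ∘ y) := by
  refine (F.invariant x y _ _ ?_).mp h
  rw [← Sum.comp_elim]
  exact sameType_comp_equiv σ _

theorem IER.rel_comp_iff_mem_autU {β : Type u} (F : IER L M β) (b : β → M) (σ τ : M ≃[L] M) :
    F.rel (⇑σ ∘ b) (⇑τ ∘ b) ↔ σ⁻¹ * τ ∈ autU L M F b := by
  change _ ↔ F.rel b (⇑(σ⁻¹ * τ) ∘ b)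
  constructor
  · intro h
    simpa only [← Function.comp_assoc, ← coe_mul, inv_mul_cancel, coe_one,
      Function.id_comp] using F.rel_comp_equiv σ⁻¹ h
  · intro h
    simpa only [← Function.comp_assoc, ← coe_mul, mul_inv_cancel_left] using
      F.rel_comp_equiv σ h

theorem autSet_subset_autU {α : Type u} (E : IER L M α) {a : α → M} {A : Set M}
    (ha : Set.range a ⊆ A) : autSet L M A ⊆ autU L M E a := by
  intro σ hσ
  have : ⇑σ ∘ a = a := funext fun i => hσ _ (ha (mem_range_self i))
  show E.rel a (⇑σ ∘ a)
  rw [this]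
  exact E.equiv.refl a

end Basic

section Coheirs

variable (N : L.ElementarySubstructure M) {β : Type u}

def realizationsIn {Γ : Type u} (e : Γ → M) (φ : L.Formula (Γ ⊕ β)) :
    Set (β → ↥(N : Set M)) :=
  {m | φ.Realize (Sum.elim e (Subtype.val ∘ m))}

theorem realizationsIn_not {Γ : Type u} (e : Γ → M) (φ : L.Formula (Γ ⊕ β)) :
    realizationsIn N e φ.not = (realizationsIn N e φ)ᶜ := by
  ext m
  simp [realizationsIn]

theorem realizationsIn_relabel {Γ Γ' : Type u} (g : Γ' → Γ) (e : Γ → M)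
    (φ : L.Formula (Γ' ⊕ β)) :
    realizationsIn N e (φ.relabel (Sum.map g id)) = realizationsIn N (e ∘ g) φ := by
  ext m
  simp only [realizationsIn, mem_ofPred_eq, Formula.realize_relabel, Sum.elim_comp_map,
    Function.comp_id]

theorem realizationsIn_eq_of_sameType {Γ : Type u} {e e' : Γ → M}
    (h : SameType L M (Sum.elim (Subtype.val : ↥(N : Set M) → M) e) (Sum.elim Subtype.val e'))
    (φ : L.Formula ((↥(N : Set M) ⊕ Γ) ⊕ β)) :
    realizationsIn N (Sum.elim Subtype.val e) φ = realizationsIn N (Sum.elim Subtype.val e') φ := by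
  ext m
  have plug : ∀ e : Γ → M, Sum.elim (Subtype.val : ↥(N : Set M) → M) e ∘
      Sum.elim id (Sum.inl ∘ m) = Sum.elim (Sum.elim Subtype.val e) (Subtype.val ∘ m) :=
    fun e => funext (by rintro (_ | _) <;> rfl)
  have h' := h (φ.relabel (Sum.elim id (Sum.inl ∘ m)))
  simp only [Formula.realize_relabel, plug] at h'
  exact h'

variable {N}

/-- `x` realizes the coheir of `D` over `e`: a formula holds of `(e, x)` as soon as it holds of
`(e, m)` for `D`-almost all tuples `m` from `N`. -/
def RealizesCoheir (D : Ultrafilter (β → ↥(N : Set M))) {Γ : Type u} (e : Γ → M) (x : β → M) :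
    Prop :=
  ∀ φ : L.Formula (Γ ⊕ β), realizationsIn N e φ ∈ D → φ.Realize (Sum.elim e x)

variable {D : Ultrafilter (β → ↥(N : Set M))}

theorem RealizesCoheir.realize_iff {Γ : Type u} {e : Γ → M} {x : β → M}
    (h : RealizesCoheir D e x) (φ : L.Formula (Γ ⊕ β)) :
    φ.Realize (Sum.elim e x) ↔ realizationsIn N e φ ∈ D := by
  refine ⟨fun hφ => ?_, h φ⟩
  by_contra hD
  rw [← Ultrafilter.compl_mem_iff_notMem, ← realizationsIn_not] at hD
  exact h _ hD hφ

theorem RealizesCoheir.comp {Γ Γ' : Type u} {e : Γ → M} {x : β → M}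
    (h : RealizesCoheir D e x) (g : Γ' → Γ) {e' : Γ' → M} (hg : e ∘ g = e') :
    RealizesCoheir D e' x := by
  subst hg
  intro φ hφ
  rw [← realizationsIn_relabel] at hφ
  simpa only [Formula.realize_relabel, Sum.elim_comp_map, Function.comp_id] using h _ hφ

theorem RealizesCoheir.sameType_elim {Γ : Type u} {e : Γ → M} {x y : β → M}
    (hx : RealizesCoheir D e x) (hy : RealizesCoheir D e y) :
    SameType L M (Sum.elim e x) (Sum.elim e y) :=
  fun φ => (hx.realize_iff φ).trans (hy.realize_iff φ).symm

theorem SameType.sum_elim_of_realizesCoheir {Γ : Type u} {x x' : Γ → M} {y y' : β → M}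
    (hx : SameType L M (Sum.elim (Subtype.val : ↥(N : Set M) → M) x) (Sum.elim Subtype.val x'))
    (hy : RealizesCoheir D (Sum.elim (Subtype.val : ↥(N : Set M) → M) x) y)
    (hy' : RealizesCoheir D (Sum.elim (Subtype.val : ↥(N : Set M) → M) x') y') :
    SameType L M (Sum.elim (Sum.elim (Subtype.val : ↥(N : Set M) → M) x) y)
      (Sum.elim (Sum.elim Subtype.val x') y') :=
  fun φ => by rw [hy.realize_iff, hy'.realize_iff, realizationsIn_eq_of_sameType N hx]

theorem IER.rel_iff_of_realizesCoheir (F : IER L M β) {x x' y y' : β → M}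
    (hx : SameType L M (Sum.elim (Subtype.val : ↥(N : Set M) → M) x) (Sum.elim Subtype.val x'))
    (hy : RealizesCoheir D (Sum.elim (Subtype.val : ↥(N : Set M) → M) x) y)
    (hy' : RealizesCoheir D (Sum.elim (Subtype.val : ↥(N : Set M) → M) x') y') :
    F.rel x y ↔ F.rel x' y' :=
  F.invariant _ _ _ _ <| by
    simpa only [Sum.elim_comp_map, Sum.elim_comp_inr, Function.comp_id] using
      SameType.comp L M (hx.sum_elim_of_realizesCoheir hy hy') (Sum.map Sum.inr id)

theorem exists_realizesCoheir {κ : Cardinal.{u}} (hsat : Saturated L M κ) (hβ : #β < κ)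
    (D : Ultrafilter (β → ↥(N : Set M))) {Γ : Type u} (hΓ : #Γ < κ) (e : Γ → M) :
    ∃ x : β → M, RealizesCoheir D e x := by
  refine hsat Γ β hΓ hβ e {φ | realizationsIn N e φ ∈ D} fun s hs => ?_
  have hinter : (⋂ φ ∈ s, realizationsIn N e φ) ∈ D :=
    (Filter.biInter_finset_mem s).2 fun φ hφ => hs hφ
  obtain ⟨m, hm⟩ := Ultrafilter.nonempty_of_mem hinter
  exact ⟨Subtype.val ∘ m, fun φ hφ => mem_iInter₂.mp hm φ hφ⟩

end Coheirs

section FinitelySatisfiable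

variable {N : L.ElementarySubstructure M} {β : Type u}

theorem exists_realize_val_comp_of_realize (ψ : L.Formula (↥(N : Set M) ⊕ β)) {b : β → M}
    (h : ψ.Realize (Sum.elim Subtype.val b)) :
    ∃ m : β → ↥(N : Set M), ψ.Realize (Sum.elim Subtype.val (Subtype.val ∘ m)) := by
  classical
  let t : Set β := {v | Sum.inr v ∈ ψ.freeVarFinset}
  have : Finite t := (ψ.freeVarFinset.finite_toSet.preimage Sum.inr_injective.injOn).to_subtype
  let f : ψ.freeVarFinset → ↥(N : Set M) ⊕ t := fun ⟨z, hz⟩ => match z, hz with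
    | Sum.inl n, _ => Sum.inl n
    | Sum.inr v, hv => Sum.inr ⟨v, hv⟩
  let χ : L.Formula (↥(N : Set M) ⊕ t) := ψ.restrictFreeVar f
  have restrict : ∀ c : β → M, χ.Realize (Sum.elim Subtype.val (c ∘ Subtype.val)) ↔
      ψ.Realize (Sum.elim Subtype.val c) :=
    fun c => BoundedFormula.realize_restrictFreeVar _ (by rintro ⟨_ | _, _⟩ <;> rfl)
  have hM : (χ.iExs t).Realize (N.subtype ∘ id) :=
    Formula.realize_iExs.2 ⟨b ∘ Subtype.val, (restrict b).2 h⟩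
  obtain ⟨i, hi⟩ := Formula.realize_iExs.1 ((N.subtype.map_formula _ _).1 hM)
  let m : β → ↥(N : Set M) := fun v =>
    if hv : v ∈ t then i ⟨v, hv⟩ else haveI : Nonempty M := ⟨b v⟩; Classical.arbitrary ↥N
  refine ⟨m, (restrict _).1 ?_⟩
  have hmi : Subtype.val ∘ m ∘ Subtype.val = N.subtype ∘ i :=
    funext fun v => by simp [m]
  rw [Function.comp_assoc, hmi]
  have hi' := (N.subtype.map_formula χ (Sum.elim id i)).2 hi
  rwa [Sum.comp_elim, Function.comp_id] at hi'

variable (N) in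
theorem exists_realizesCoheir_val (b : β → M) :
    ∃ D : Ultrafilter (β → ↥(N : Set M)), RealizesCoheir D (Subtype.val : ↥(N : Set M) → M) b := by
  classical
  obtain ⟨D, hD⟩ := Ultrafilter.exists_ultrafilter_of_finite_inter_nonempty
    (realizationsIn N Subtype.val '' {ψ | ψ.Realize (Sum.elim Subtype.val b)}) fun T hT => by
      obtain ⟨Ψ, hΨ, rfl⟩ := Finset.subset_set_image_iff.1 hT
      obtain ⟨m, hm⟩ := exists_realize_val_comp_of_realize (Formula.iInf fun ψ : Ψ => ψ.1)
        (Formula.realize_iInf.2 fun ψ => hΨ ψ.2)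
      refine ⟨m, fun A hA => ?_⟩
      obtain ⟨ψ, hψ, rfl⟩ := Finset.mem_image.1 hA
      exact Formula.realize_iInf.1 hm ⟨ψ, hψ⟩
  refine ⟨D, fun ψ hψ => ?_⟩
  by_contra hb
  have hnot : realizationsIn N Subtype.val ψ.not ∈ D :=
    hD ⟨ψ.not, Formula.realize_not.2 hb, rfl⟩
  rw [realizationsIn_not] at hnot
  exact Ultrafilter.compl_mem_iff_notMem.1 hnot hψ

end FinitelySatisfiable

section CoheirSequence

variable {N : L.ElementarySubstructure M} {β : Type u}

theorem exists_coheir_sequence {κ : Cardinal.{u}} (hsat : Saturated L M κ) (hκ : ℵ₀ ≤ κ)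
    {ι : Type u} [LinearOrder ι] [WellFoundedLT ι] (hι : #ι < κ) (hβ : #β < κ)
    (D : Ultrafilter (β → ↥(N : Set M))) {Γ : Type u} (hΓ : #Γ < κ) (e : Γ → M) :
    ∃ w : ι → β → M, ∀ i, RealizesCoheir D (Sum.elim e fun p : {j // j < i} × β => w p.1 p.2)
      (w i) := by
  have hparam : ∀ i : ι, #(Γ ⊕ {j // j < i} × β) < κ := fun i => by
    simp only [mk_sum, mk_prod, lift_id]
    exact add_lt_of_lt hκ hΓ (mul_lt_of_lt hκ ((mk_subtype_le _).trans_lt hι) hβ)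
  choose step hstep using fun i (w : {j // j < i} → β → M) =>
    exists_realizesCoheir hsat hβ D (hparam i) (Sum.elim e fun p => w p.1 p.2)
  let w : ι → β → M := wellFounded_lt.fix fun i w => step i fun j => w j.1 j.2
  refine ⟨w, fun i => ?_⟩
  rw [show w i = step i fun j => w j.1 from wellFounded_lt.fix_eq _ _]
  exact hstep i fun j => w j.1

theorem Homog.exists_mem_autSet {κ : Cardinal.{u}} (hom : Homog L M κ) {A : Set M}
    {γ : Type u} (hγ : #(A ⊕ γ) < κ) {x y : γ → M}
    (h : SameType L M (Sum.elim (Subtype.val : A → M) x) (Sum.elim Subtype.val y)) :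
    ∃ τ ∈ autSet L M A, ⇑τ ∘ x = y := by
  obtain ⟨τ, hτ⟩ := hom _ _ _ hγ h
  exact ⟨τ, fun a ha => hτ (Sum.inl ⟨a, ha⟩), funext fun v => hτ (Sum.inr v)⟩

theorem IER.exists_lt_rel_of_card_lt (F : IER L M β) {ι : Type u} [LinearOrder ι]
    {S : Set (β → M)} (hS : #S < #ι) {w : ι → β → M} (hw : ∀ i, ∃ s ∈ S, F.rel (w i) s) :
    ∃ i j, i < j ∧ F.rel (w i) (w j) := by
  choose s hsS hs using hw
  have : ¬ Function.Injective fun i => (⟨s i, hsS i⟩ : S) :=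
    fun hinj => hS.not_ge (mk_le_of_injective hinj)
  obtain ⟨i, j, hsij, hij⟩ := Function.not_injective_iff.1 this
  have hsij : s i = s j := congrArg Subtype.val hsij
  rcases hij.lt_or_gt with hij | hji
  · exact ⟨i, j, hij, F.equiv.trans (hs i) (hsij ▸ F.equiv.symm (hs j))⟩
  · exact ⟨j, i, hji, F.equiv.trans (hs j) (hsij ▸ F.equiv.symm (hs i))⟩

end CoheirSequence

section KeyLemma

variable {κ : Cardinal.{u}} {β : Type u} {F : IER L M β} {b : β → M}

theorem BddU.rel_comp_of_mem_autSet (mon : Monster L M κ) (hβ : #β < κ)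
    {X : Set (M ≃[L] M)} (hbdd : BddU L M κ X F b) {N : L.ElementarySubstructure M}
    (hN : #(N : Set M) < κ) (hX : autSet L M N ⊆ X) {σ : M ≃[L] M}
    (hσ : σ ∈ autSet L M N) : F.rel b (⇑σ ∘ b) := by
  obtain ⟨S, hS, horbit⟩ := hbdd
  have hℵ : ℵ₀ ≤ κ := mon.aleph0_lt.le
  set b' := ⇑σ ∘ b
  have hbb' : SameType L M (Sum.elim (Subtype.val : ↥(N : Set M) → M) b)
      (Sum.elim Subtype.val b') := by
    convert sameType_comp_equiv σ (Sum.elim (Subtype.val : ↥(N : Set M) → M) b) using 1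
    ext (n | v)
    · exact (hσ n n.2).symm
    · rfl
  obtain ⟨D, hbD⟩ := exists_realizesCoheir_val N b
  let ι := (Order.succ #S).ord.ToType
  have hι : #ι = Order.succ #S := by simp [ι]
  have hικ : #ι < κ :=
    hι ▸ (Order.succ_le_of_lt (cantor _)).trans_lt (mon.strongLimit _ hS)
  have hNβ : #(↥(N : Set M) ⊕ β) < κ := by
    simpa only [mk_sum, lift_id] using add_lt_of_lt hℵ hN hβ
  have hNββ : #(↥(N : Set M) ⊕ (β ⊕ β)) < κ := by
    simpa only [mk_sum, lift_id] using add_lt_of_lt hℵ hN (add_lt_of_lt hℵ hβ hβ)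
  obtain ⟨w, hw⟩ := exists_coheir_sequence mon.saturated hℵ hικ hβ D hNββ
    (Sum.elim Subtype.val (Sum.elim b b'))
  have hwb : ∀ i, RealizesCoheir D (Sum.elim Subtype.val b) (w i) := fun i =>
    (hw i).comp (Sum.elim (Sum.inl ∘ Sum.inl) (Sum.inl ∘ Sum.inr ∘ Sum.inl))
      (funext <| by rintro (_ | _) <;> rfl)
  have hwb' : ∀ i, RealizesCoheir D (Sum.elim Subtype.val b') (w i) := fun i =>
    (hw i).comp (Sum.elim (Sum.inl ∘ Sum.inl) (Sum.inl ∘ Sum.inr ∘ Sum.inr))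
      (funext <| by rintro (_ | _) <;> rfl)
  have hww : ∀ i j, i < j → RealizesCoheir D (Sum.elim Subtype.val (w i)) (w j) :=
    fun i j hij => (hw j).comp (Sum.elim (Sum.inl ∘ Sum.inl) fun v => Sum.inr (⟨i, hij⟩, v))
      (funext <| by rintro (_ | _) <;> rfl)
  have htype : ∀ i, SameType L M (Sum.elim (Subtype.val : ↥(N : Set M) → M) b)
      (Sum.elim Subtype.val (w i)) := fun i =>
    hbD.sameType_elim ((hwb i).comp Sum.inl rfl)
  obtain ⟨i, j, hij, hFij⟩ := F.exists_lt_rel_of_card_lt (hι ▸ Order.lt_succ #S) fun i => by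
    obtain ⟨τ, hτ, hτb⟩ := mon.homog.exists_mem_autSet hNβ (htype i)
    exact hτb ▸ horbit τ (hX hτ)
  have hFbj : F.rel b (w j) :=
    (F.rel_iff_of_realizesCoheir (htype i).symm (hww i j hij) (hwb j)).1 hFij
  have hFb'j : F.rel b' (w j) := (F.rel_iff_of_realizesCoheir hbb' (hwb j) (hwb' j)).1 hFbj
  exact F.equiv.trans hFbj (F.equiv.symm hFb'j)

end KeyLemma

section InducedRelation

variable {β γ : Type u} (F : IER L M β) (b : β → M) (c : γ → M)

/-- The relation whose class of `σ ∘ c` corresponds to the `F`-class of `σ ∘ b`. -/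
def inducedRel (x y : γ → M) : Prop :=
  SameType L M x y ∧ ∀ σ τ : M ≃[L] M, ⇑σ ∘ c = x → ⇑τ ∘ c = y → F.rel (⇑σ ∘ b) (⇑τ ∘ b)

variable {F b c}

theorem IER.rel_comp_of_comp_eq (hfix : autSet L M (range c) ⊆ autU L M F b)
    {σ τ : M ≃[L] M} (h : ⇑σ ∘ c = ⇑τ ∘ c) : F.rel (⇑σ ∘ b) (⇑τ ∘ b) := by
  refine (F.rel_comp_iff_mem_autU b σ τ).2 (hfix ?_)
  rintro _ ⟨i, rfl⟩
  rw [coe_mul, Function.comp_apply, ← Function.comp_apply (f := ⇑τ), ← h]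
  exact σ.symm_apply_apply (c i)

theorem inducedRel_equivalence {κ : Cardinal.{u}} (hom : Homog L M κ) (hγ : #γ < κ)
    (hfix : autSet L M (range c) ⊆ autU L M F b) : Equivalence (inducedRel F b c) where
  refl x := ⟨.refl x, fun _ _ hσ hτ => F.rel_comp_of_comp_eq hfix (hσ.trans hτ.symm)⟩
  symm h := ⟨h.1.symm, fun σ τ hσ hτ => F.equiv.symm (h.2 τ σ hτ hσ)⟩
  trans {x y z} hxy hyz := by
    refine ⟨hxy.1.trans hyz.1, fun σ τ hσ hτ => ?_⟩
    obtain ⟨ρ, hρ⟩ := hom γ c y hγ ((sameType_comp_equiv σ c).trans (hσ ▸ hxy.1))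
    have hρ : ⇑ρ ∘ c = y := funext hρ
    exact F.equiv.trans (hxy.2 σ ρ hσ hρ) (hyz.2 ρ τ hρ hτ)

theorem inducedRel_of_sameType {κ : Cardinal.{u}} (hom : Homog L M κ) (hκ : ℵ₀ ≤ κ)
    (hγ : #γ < κ) {x y x' y' : γ → M} (h : SameType L M (Sum.elim x y) (Sum.elim x' y'))
    (hxy : inducedRel F b c x y) : inducedRel F b c x' y' := by
  refine ⟨h.sum_elim_left.symm.trans (hxy.1.trans h.sum_elim_right), fun σ τ hσ hτ => ?_⟩
  have hγγ : #(γ ⊕ γ) < κ := by simpa only [mk_sum, lift_id] using add_lt_of_lt hκ hγ hγ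
  obtain ⟨ρ, hρ⟩ := hom _ _ _ hγγ h.symm
  have hσ' : ⇑(ρ * σ) ∘ c = x := by
    rw [coe_mul, Function.comp_assoc, hσ]
    exact funext fun i => hρ (Sum.inl i)
  have hτ' : ⇑(ρ * τ) ∘ c = y := by
    rw [coe_mul, Function.comp_assoc, hτ]
    exact funext fun i => hρ (Sum.inr i)
  have := (F.rel_comp_iff_mem_autU b _ _).1 (hxy.2 _ _ hσ' hτ')
  rwa [mul_inv_rev, mul_assoc, inv_mul_cancel_left, ← F.rel_comp_iff_mem_autU] at this

theorem exists_autU_eq {κ : Cardinal.{u}} (hom : Homog L M κ) (hκ : ℵ₀ ≤ κ) (hγ : #γ < κ)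
    (hfix : autSet L M (range c) ⊆ autU L M F b) :
    ∃ G : IER L M γ, autU L M G c = autU L M F b := by
  refine ⟨⟨inducedRel F b c, inducedRel_equivalence hom hγ hfix, fun x y x' y' h =>
    ⟨inducedRel_of_sameType hom hκ hγ h, inducedRel_of_sameType hom hκ hγ h.symm⟩⟩, ?_⟩
  ext σ
  change inducedRel F b c c (⇑σ ∘ c) ↔ F.rel b (⇑σ ∘ b)
  refine ⟨fun h => by simpa using h.2 1 σ rfl rfl, fun h => ⟨sameType_comp_equiv σ c, ?_⟩⟩
  intro σ' τ hσ' hτ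
  have h1 : F.rel (⇑σ' ∘ b) b := F.rel_comp_of_comp_eq (σ := σ') (τ := 1) hfix hσ'
  exact F.equiv.trans h1 (F.equiv.trans h (F.rel_comp_of_comp_eq hfix hτ.symm))

theorem BddU.of_autU_subset {κ : Cardinal.{u}} {X : Set (M ≃[L] M)} {G : IER L M γ}
    (h : autU L M F b ⊆ autU L M G c) (hbdd : BddU L M κ X F b) : BddU L M κ X G c := by
  obtain ⟨S, hS, horbit⟩ := hbdd
  let S' := {s ∈ S | ∃ ρ : M ≃[L] M, F.rel (⇑ρ ∘ b) s}
  choose ρ hρ using fun s : S' => s.2.2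
  refine ⟨range fun s => ⇑(ρ s) ∘ c,
    mk_range_le.trans_lt ((mk_le_mk_of_subset fun _ hs => hs.1).trans_lt hS), fun σ hσ => ?_⟩
  obtain ⟨s, hsS, hσs⟩ := horbit σ hσ
  refine ⟨_, mem_range_self ⟨s, hsS, σ, hσs⟩, ?_⟩
  exact (G.rel_comp_iff_mem_autU c _ _).2
    (h ((F.rel_comp_iff_mem_autU b _ _).1 (F.equiv.trans hσs (F.equiv.symm (hρ _)))))

theorem BddU.exists_autU_val_eq {κ : Cardinal.{u}} (mon : Monster L M κ) (hβ : #β < κ)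
    {X : Set (M ≃[L] M)} (hbdd : BddU L M κ X F b) {N : L.ElementarySubstructure M}
    (hN : #(N : Set M) < κ) (hX : autSet L M N ⊆ X) :
    ∃ G : IER L M ↥(N : Set M), autU L M G Subtype.val = autU L M F b ∧
      BddU L M κ X G Subtype.val := by
  obtain ⟨G, hG⟩ := exists_autU_eq (c := Subtype.val) mon.homog mon.aleph0_lt.le hN <| by
    rw [Subtype.range_val]
    exact fun σ => hbdd.rel_comp_of_mem_autSet mon hβ hN hX
  exact ⟨G, hG, hbdd.of_autU_subset hG.ge⟩

end InducedRelation

variable (L) in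
theorem exists_elementarySubstructure_superset_card_le (s : Set M) {κ : Cardinal.{u}}
    (hℵ : ℵ₀ ≤ κ) (hs : #s ≤ κ) (hL : L.card ≤ κ) :
    ∃ N : L.ElementarySubstructure M, s ⊆ N ∧ #(N : Set M) ≤ κ := by
  rcases le_total κ #M with hM | hM
  · obtain ⟨N, hsN, hN⟩ := exists_elementarySubstructure_card_eq L s κ hℵ (by simpa using hs)
      (by simpa using hL) (by simpa using hM)
    exact ⟨N, hsN, by simpa using hN.le⟩
  · exact ⟨⊤, by simp, by simpa using hM⟩

/-- If `b_F ∈ bddᵘ(a_E)`, then there is an ultraimaginary `c_G`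
of arity at most `|a|+|T|` in `bddᵘ(a_E)` which is interdefinable with `b_F` over
`∅`; moreover `c` can be taken to be an enumeration of any small model of size at
most `|a|+|T|` containing `a`. -/
theorem statement_4 (L : FirstOrder.Language.{u, u}) (M : Type u) [L.Structure M]
    (κbar : Cardinal.{u}) (_mon : Monster L M κbar)
    {α β : Type u} (hα : #α < κbar) (hβ : #β < κbar)
    (E : IER L M α) (a : α → M) (F : IER L M β) (b : β → M)
    (hbdd : BddU L M κbar (autU L M E a) F b) :
    (∃ (γ : Type u) (_ : #γ ≤ #α + cardT L) (G : IER L M γ) (c : γ → M),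
      autU L M G c = autU L M F b ∧ BddU L M κbar (autU L M E a) G c) ∧
    (∀ N : L.ElementarySubstructure M, Set.range a ⊆ (N : Set M) →
      #(N : Set M) ≤ #α + cardT L →
      ∃ G : IER L M ↥(N : Set M),
        autU L M G (Subtype.val : ↥(N : Set M) → M) = autU L M F b ∧
          BddU L M κbar (autU L M E a) G (Subtype.val : ↥(N : Set M) → M)) := by
  have hℵ : ℵ₀ ≤ κbar := _mon.aleph0_lt.le
  have hsmall : #α + cardT L < κbar :=
    add_lt_of_lt hℵ hα (add_lt_of_lt hℵ _mon.lang_lt _mon.aleph0_lt)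
  refine ⟨?_, fun N haN hN =>
    hbdd.exists_autU_val_eq _mon hβ (hN.trans_lt hsmall) (autSet_subset_autU E haN)⟩
  obtain ⟨N, haN, hN⟩ := exists_elementarySubstructure_superset_card_le L (range a)
    (le_add_self.trans le_add_self) (mk_range_le.trans le_self_add)
    (le_self_add.trans le_add_self)
  obtain ⟨G, hG, hbddG⟩ :=
    hbdd.exists_autU_val_eq _mon hβ (hN.trans_lt hsmall) (autSet_subset_autU E haN)
  exact ⟨_, hN, G, _, hG, hbddG⟩

end BddUltra
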